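/- If G is a finite simple graph of order n, then th_⌊Z⌋(G) ≥ ⌈2√n − 1⌉. -/

import Mathlib

open SimpleGraph

namespace ZFT

variable {V : Type*} {α : Type*} {β : Type*}

/-! ### Standard zero forcing (simultaneous propagation) -/

/-- One round of simultaneous standard zero forcing: a blue vertex forces its
unique white neighbor. -/
def zStep (G : SimpleGraph V) (S : Set V) : Set V :=
  S ∪ {w | ∃ u ∈ S, G.Adj u w ∧ ∀ x, G.Adj u x → x ∉ S → x = w}

/-- `B` is a standard zero forcing set of `G`. -/
def IsZeroForcingSet (G : SimpleGraph V) (B : Set V) : Prop :=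
  ∃ t : ℕ, (zStep G)^[t] B = Set.univ

/-- The standard propagation time `pt_Z(G;B)` (`⊤` if `B` is not a zero forcing set). -/
noncomputable def ptZ (G : SimpleGraph V) (B : Set V) : ℕ∞ :=
  sInf {n : ℕ∞ | ∃ t : ℕ, n = t ∧ (zStep G)^[t] B = Set.univ}

/-- The standard throttling number `th_Z(G;B) = |B| + pt_Z(G;B)`. -/
noncomputable def thZ (G : SimpleGraph V) (B : Set V) : ℕ∞ :=
  (B.ncard : ℕ∞) + ptZ G B

/-- The standard throttling number `th_Z(G)`. -/
noncomputable def thZgraph (G : SimpleGraph V) : ℕ∞ :=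
  sInf {n : ℕ∞ | ∃ B : Set V, IsZeroForcingSet G B ∧ n = thZ G B}

/-- The standard zero forcing number `Z(G)`. -/
noncomputable def Znum (G : SimpleGraph V) : ℕ :=
  sInf {k : ℕ | ∃ B : Set V, IsZeroForcingSet G B ∧ B.ncard = k}

/-- The standard propagation time `pt_Z(G)`, minimized over minimum zero forcing sets. -/
noncomputable def ptZgraph (G : SimpleGraph V) : ℕ∞ :=
  sInf {n : ℕ∞ | ∃ B : Set V, IsZeroForcingSet G B ∧ B.ncard = Znum G ∧ n = ptZ G B}

/-! ### Sets of standard forces -/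

/-- Validity of a single standard force `u → w` when `blue` is the blue set. -/
def zForceValid (G : SimpleGraph V) (blue : Set V) (u w : V) : Prop :=
  u ∈ blue ∧ w ∉ blue ∧ G.Adj u w ∧ ∀ x, G.Adj u x → x ∉ blue → x = w

/-- Validity of a chronological list of standard forces starting from a blue set. -/
def zValidList (G : SimpleGraph V) : Set V → List (V × V) → Prop
  | _, [] => True
  | blue, p :: L => zForceValid G blue p.1 p.2 ∧ zValidList G (insert p.2 blue) L

/-- The blue set after performing all forces in a list, starting from `B`. -/
def endBlue (B : Set V) (L : List (V × V)) : Set V :=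
  B ∪ {w | ∃ u, (u, w) ∈ L}

/-- The set of vertices that have performed a force in a list. -/
def endForced (L : List (V × V)) : Set V := {u | ∃ w, (u, w) ∈ L}

/-- `F` is a set of standard forces of `B` in `G` (recorded from a maximal
chronological list of forces). -/
def IsZForceSet (G : SimpleGraph V) (B : Set V) (F : Set (V × V)) : Prop :=
  ∃ L : List (V × V), zValidList G B L ∧
    (∀ u w, ¬ zForceValid G (endBlue B L) u w) ∧ F = {p | p ∈ L}

/-- The set of blue vertices at time `t` when the forces of `F` are performed at the
earliest possible time steps, starting from `B` blue. -/
def zBlueAt (G : SimpleGraph V) (F : Set (V × V)) (B : Set V) : ℕ → Set V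
  | 0 => B
  | t + 1 =>
      zBlueAt G F B t ∪ {w | ∃ v, (v, w) ∈ F ∧ zForceValid G (zBlueAt G F B t) v w}

/-- The standard propagation time `pt_Z(G;F)` of a set of forces `F` of `B`. -/
noncomputable def ptZofF (G : SimpleGraph V) (F : Set (V × V)) (B : Set V) : ℕ∞ :=
  sInf {n : ℕ∞ | ∃ t : ℕ, n = t ∧ zBlueAt G F B t = Set.univ}

/-! ### `⌊Z⌋` (minor monotone floor) forcing -/

/-- Validity of a single `⌊Z⌋` force `u → w`: `u` is blue and has not yet forced, `w`
is white, and either `w` is the unique white neighbor of `u`, or all neighbors of `u`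
are blue (a hop). -/
def zfForceValid (G : SimpleGraph V) (blue forced : Set V) (u w : V) : Prop :=
  u ∈ blue ∧ w ∉ blue ∧ u ∉ forced ∧
    ((G.Adj u w ∧ ∀ x, G.Adj u x → x ∉ blue → x = w) ∨ ∀ x, G.Adj u x → x ∈ blue)

/-- Validity of a chronological list of `⌊Z⌋` forces. -/
def zfValidList (G : SimpleGraph V) : Set V → Set V → List (V × V) → Prop
  | _, _, [] => True
  | blue, forced, p :: L =>
      zfForceValid G blue forced p.1 p.2 ∧
        zfValidList G (insert p.2 blue) (insert p.1 forced) L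

/-- `F` is a set of `⌊Z⌋` forces of `B` in `G` (recorded from a maximal chronological
list of `⌊Z⌋` forces starting with `B` blue). -/
def IsZFForceSet (G : SimpleGraph V) (B : Set V) (F : Set (V × V)) : Prop :=
  ∃ L : List (V × V), zfValidList G B ∅ L ∧
    (∀ u w, ¬ zfForceValid G (endBlue B L) (endForced L) u w) ∧ F = {p | p ∈ L}

/-- The set of blue vertices at time `t` when the `⌊Z⌋` forces of `F` are performed at
the earliest possible time steps, starting from `B` blue. -/
def zfBlueAt (G : SimpleGraph V) (F : Set (V × V)) (B : Set V) : ℕ → Set V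
  | 0 => B
  | t + 1 =>
      zfBlueAt G F B t ∪
        {w | ∃ v, (v, w) ∈ F ∧ v ∈ zfBlueAt G F B t ∧ w ∉ zfBlueAt G F B t ∧
          (∀ w', (v, w') ∈ F → w' ∈ zfBlueAt G F B t → w' ∈ B) ∧
          ((G.Adj v w ∧ ∀ x, G.Adj v x → x ∉ zfBlueAt G F B t → x = w) ∨
            ∀ x, G.Adj v x → x ∈ zfBlueAt G F B t)}

/-- The `⌊Z⌋` propagation time `pt_⌊Z⌋(G;F)` of a set of `⌊Z⌋` forces `F` of `B`. -/
noncomputable def ptZFofF (G : SimpleGraph V) (F : Set (V × V)) (B : Set V) : ℕ∞ :=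
  sInf {n : ℕ∞ | ∃ t : ℕ, n = t ∧ zfBlueAt G F B t = Set.univ}

/-- The `⌊Z⌋` propagation time `pt_⌊Z⌋(G;B)`, minimized over sets of `⌊Z⌋` forces of `B`. -/
noncomputable def ptZF (G : SimpleGraph V) (B : Set V) : ℕ∞ :=
  sInf {n : ℕ∞ | ∃ F : Set (V × V), IsZFForceSet G B F ∧ n = ptZFofF G F B}

/-- The `⌊Z⌋` throttling number `th_⌊Z⌋(G;B) = |B| + pt_⌊Z⌋(G;B)`. -/
noncomputable def thZF (G : SimpleGraph V) (B : Set V) : ℕ∞ :=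
  (B.ncard : ℕ∞) + ptZF G B

/-- The `⌊Z⌋` throttling number `th_⌊Z⌋(G)`, minimized over all `B ⊆ V(G)`. -/
noncomputable def thZFgraph (G : SimpleGraph V) : ℕ∞ :=
  sInf {n : ℕ∞ | ∃ B : Set V, n = thZF G B}

/-- `B` is a `⌊Z⌋` forcing set of `G`. -/
def IsZFForcingSet (G : SimpleGraph V) (B : Set V) : Prop :=
  ∃ F : Set (V × V), IsZFForceSet G B F ∧ B ∪ {w | ∃ u, (u, w) ∈ F} = Set.univ

/-- The `⌊Z⌋` forcing number `⌊Z⌋(G)`. -/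
noncomputable def ZFnum (G : SimpleGraph V) : ℕ :=
  sInf {k : ℕ | ∃ B : Set V, IsZFForcingSet G B ∧ B.ncard = k}

/-- The `⌊Z⌋` propagation time `pt_⌊Z⌋(G)`, minimized over minimum `⌊Z⌋` forcing sets. -/
noncomputable def ptZFgraph (G : SimpleGraph V) : ℕ∞ :=
  sInf {n : ℕ∞ | ∃ B : Set V, IsZFForcingSet G B ∧ B.ncard = ZFnum G ∧ n = ptZF G B}

/-! ### Contractions, minors, and products -/

/-- The graph obtained from `H` by contracting (all) the edges in `C`: its vertices are
the connected components of the spanning subgraph of `H` with edge set `C ∩ E(H)`, and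
two distinct components are adjacent iff `H` has an edge between them. -/
def contractEdges (H : SimpleGraph α) (C : Set (Sym2 α)) :
    SimpleGraph (SimpleGraph.fromEdgeSet C ⊓ H).ConnectedComponent where
  Adj c d := c ≠ d ∧ ∃ a b, H.Adj a b ∧
      (SimpleGraph.fromEdgeSet C ⊓ H).connectedComponentMk a = c ∧
      (SimpleGraph.fromEdgeSet C ⊓ H).connectedComponentMk b = d
  symm := ⟨by
    rintro c d ⟨hcd, a, b, hab, ha, hb⟩
    exact ⟨hcd.symm, b, a, hab.symm, hb, ha⟩⟩
  loopless := ⟨fun c h => h.1 rfl⟩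

/-- `G` is a minor of `H`: `G` is isomorphic to a subgraph of a graph obtained from an
induced subgraph of `H` by contracting a set of edges. -/
def IsMinor (G : SimpleGraph β) (H : SimpleGraph α) : Prop :=
  ∃ (s : Set α) (C : Set (Sym2 s))
    (G'' : SimpleGraph (SimpleGraph.fromEdgeSet C ⊓ H.induce s).ConnectedComponent),
      G'' ≤ contractEdges (H.induce s) C ∧ Nonempty (G ≃g G'')

/-- The Cartesian product `K_a □ P_{b+1}`. -/
def prodKP (a b : ℕ) : SimpleGraph (Fin a × Fin (b + 1)) :=
  (⊤ : SimpleGraph (Fin a)) □ SimpleGraph.pathGraph (b + 1)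

/-- The path edges of `K_a □ P_{b+1}` (edges within the copies of `P_{b+1}`). -/
def pathEdges (a b : ℕ) : Set (Sym2 (Fin a × Fin (b + 1))) :=
  {e | ∃ (i : Fin a) (j j' : Fin (b + 1)),
    (SimpleGraph.pathGraph (b + 1)).Adj j j' ∧ e = s((i, j), (i, j'))}

/-- The complete edges of `K_a □ P_{b+1}` (edges within the copies of `K_a`). -/
def completeEdges (a b : ℕ) : Set (Sym2 (Fin a × Fin (b + 1))) :=
  {e | ∃ (i i' : Fin a) (j : Fin (b + 1)), i ≠ i' ∧ e = s((i, j), (i', j))}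

/-- The star `K_{1,n-1}` on `n` vertices: vertex `0` is adjacent to all others. -/
def starGraph (n : ℕ) : SimpleGraph (Fin n) where
  Adj i j := i ≠ j ∧ ((i : ℕ) = 0 ∨ (j : ℕ) = 0)
  symm := ⟨by rintro i j ⟨h1, h2⟩; exact ⟨h1.symm, h2.symm⟩⟩
  loopless := ⟨fun i h => h.1 rfl⟩

/-- The independence number `α(G)`. -/
noncomputable def indepNum (G : SimpleGraph V) : ℕ :=
  sSup {k : ℕ | ∃ s : Set V, (∀ a ∈ s, ∀ b ∈ s, a ≠ b → ¬ G.Adj a b) ∧ s.ncard = k}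

/-!
The forces used by any maximal `⌊Z⌋` forcing process form a partial bijection: each vertex
forces at most once and is forced at most once. At every time step only the blue vertices that
have not yet forced can force, and there are at most `|B|` of them, because every blue vertex
outside `B` was forced by a distinct vertex that has already forced. Hence `t` rounds color at
most `|B| (t + 1)` vertices, and `|B| + t ≥ 2 √(|B| (t + 1)) - 1 ≥ 2 √n - 1` by AM-GM.
-/

lemma ceil_two_mul_sqrt_sub_one_toNat_le {n b t : ℕ} (h : n ≤ b * (t + 1)) :
    (⌈2 * √(n : ℝ) - 1⌉).toNat ≤ b + t := by
  rw [Int.toNat_le, Int.ceil_le]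
  have hamgm : (4 * n : ℝ) ≤ (b + (t + 1)) ^ 2 := by
    calc (4 * n : ℝ) ≤ 4 * (b * (t + 1)) := by gcongr; exact_mod_cast h
      _ ≤ (b + (t + 1)) ^ 2 := by rw [← mul_assoc]; exact four_mul_le_sq_add _ _
  push_cast
  nlinarith [Real.sq_sqrt (Nat.cast_nonneg (α := ℝ) n), Real.sqrt_nonneg (n : ℝ)]

section ForceList

variable {G : SimpleGraph V}

lemma zfValidList.forall_mem_not_mem {blue forced : Set V} {L : List (V × V)}
    (hL : zfValidList G blue forced L) : ∀ p ∈ L, p.1 ∉ forced ∧ p.2 ∉ blue := by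
  induction L generalizing blue forced with
  | nil => simp
  | cons q L ih =>
    obtain ⟨hq, hL⟩ := hL
    rintro p (_ | ⟨_, hp⟩)
    · exact ⟨hq.2.2.1, hq.2.1⟩
    · exact (ih hL p hp).imp (mt (Set.mem_insert_of_mem _)) (mt (Set.mem_insert_of_mem _))

lemma zfValidList.nodup_map_fst {blue forced : Set V} {L : List (V × V)}
    (hL : zfValidList G blue forced L) : (L.map Prod.fst).Nodup := by
  induction L generalizing blue forced with
  | nil => simp
  | cons q L ih =>
    refine List.nodup_cons.mpr ⟨?_, ih hL.2⟩
    simp only [List.mem_map, not_exists, not_and]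
    exact fun p hp hpq => (hL.2.forall_mem_not_mem p hp).1 (hpq ▸ Set.mem_insert _ _)

lemma zfValidList.nodup_map_snd {blue forced : Set V} {L : List (V × V)}
    (hL : zfValidList G blue forced L) : (L.map Prod.snd).Nodup := by
  induction L generalizing blue forced with
  | nil => simp
  | cons q L ih =>
    refine List.nodup_cons.mpr ⟨?_, ih hL.2⟩
    simp only [List.mem_map, not_exists, not_and]
    exact fun p hp hpq => (hL.2.forall_mem_not_mem p hp).2 (hpq ▸ Set.mem_insert _ _)

lemma IsZFForceSet.eq_of_fst_eq {B : Set V} {F : Set (V × V)} (hF : IsZFForceSet G B F)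
    {v w w' : V} (hw : (v, w) ∈ F) (hw' : (v, w') ∈ F) : w = w' := by
  obtain ⟨L, hL, -, rfl⟩ := hF
  exact congrArg Prod.snd (List.inj_on_of_nodup_map hL.nodup_map_fst hw hw' rfl)

lemma IsZFForceSet.eq_of_snd_eq {B : Set V} {F : Set (V × V)} (hF : IsZFForceSet G B F)
    {v v' w : V} (hv : (v, w) ∈ F) (hv' : (v', w) ∈ F) : v = v' := by
  obtain ⟨L, hL, -, rfl⟩ := hF
  exact congrArg Prod.fst (List.inj_on_of_nodup_map hL.nodup_map_snd hv hv' rfl)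

end ForceList

section Propagation

variable {G : SimpleGraph V} {B : Set V} {F : Set (V × V)}

lemma zfBlueAt_subset_succ (s : ℕ) : zfBlueAt G F B s ⊆ zfBlueAt G F B (s + 1) :=
  Set.subset_union_left

lemma exists_forcer_of_mem_zfBlueAt_succ {s : ℕ} {w : V} (hw : w ∈ zfBlueAt G F B (s + 1))
    (hw' : w ∉ zfBlueAt G F B s) :
    ∃ v, (v, w) ∈ F ∧ v ∈ zfBlueAt G F B s ∧
      ∀ w', (v, w') ∈ F → w' ∈ zfBlueAt G F B s → w' ∈ B := by
  obtain hw | ⟨v, hvw, hv, -, hfresh, -⟩ := hw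
  · exact absurd hw hw'
  · exact ⟨v, hvw, hv, hfresh⟩

lemma exists_forcer_of_mem_zfBlueAt {s : ℕ} {w : V} (hw : w ∈ zfBlueAt G F B s) (hwB : w ∉ B) :
    ∃ v, (v, w) ∈ F ∧ v ∈ zfBlueAt G F B s := by
  induction s with
  | zero => exact absurd hw hwB
  | succ s ih =>
    by_cases hws : w ∈ zfBlueAt G F B s
    · obtain ⟨v, hvw, hv⟩ := ih hws
      exact ⟨v, hvw, zfBlueAt_subset_succ s hv⟩
    · obtain ⟨v, hvw, hv, -⟩ := exists_forcer_of_mem_zfBlueAt_succ hw hws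
      exact ⟨v, hvw, zfBlueAt_subset_succ s hv⟩

/- Below, `f` sends each forced vertex to its forcer, so `f '' (zfBlueAt G F B s \ B)` is the
set of vertices that have forced by time `s`. -/

variable {f : V → V}

lemma image_forcer_subset_zfBlueAt (hf : ∀ v w, (v, w) ∈ F → f w = v) (s : ℕ) :
    f '' (zfBlueAt G F B s \ B) ⊆ zfBlueAt G F B s := by
  rintro _ ⟨w, ⟨hw, hwB⟩, rfl⟩
  obtain ⟨v, hvw, hv⟩ := exists_forcer_of_mem_zfBlueAt hw hwB
  rwa [hf _ _ hvw]

variable [Finite V]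

lemma ncard_zfBlueAt_le_add_ncard_image (hfst : ∀ v w w', (v, w) ∈ F → (v, w') ∈ F → w = w')
    (hf : ∀ v w, (v, w) ∈ F → f w = v) (s : ℕ) :
    (zfBlueAt G F B s).ncard ≤ B.ncard + (f '' (zfBlueAt G F B s \ B)).ncard := by
  have hinj : Set.InjOn f (zfBlueAt G F B s \ B) := by
    rintro w₁ ⟨hw₁, hw₁B⟩ w₂ ⟨hw₂, hw₂B⟩ heq
    obtain ⟨v₁, hv₁, -⟩ := exists_forcer_of_mem_zfBlueAt hw₁ hw₁B
    obtain ⟨v₂, hv₂, -⟩ := exists_forcer_of_mem_zfBlueAt hw₂ hw₂B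
    rw [hf _ _ hv₁, hf _ _ hv₂] at heq
    exact hfst _ _ _ hv₁ (heq ▸ hv₂)
  have := Set.ncard_le_ncard_sdiff_add_ncard (zfBlueAt G F B s) B
  rw [hinj.ncard_image]
  omega

lemma ncard_zfBlueAt_succ_le (hfst : ∀ v w w', (v, w) ∈ F → (v, w') ∈ F → w = w')
    (hf : ∀ v w, (v, w) ∈ F → f w = v) (s : ℕ) :
    (zfBlueAt G F B (s + 1)).ncard ≤ (zfBlueAt G F B s).ncard + B.ncard := by
  set blue := zfBlueAt G F B
  have hforcer : ∀ w ∈ blue (s + 1) \ blue s, (f w, w) ∈ F ∧ f w ∈ blue s ∧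
      ∀ w', (f w, w') ∈ F → w' ∈ blue s → w' ∈ B := by
    rintro w ⟨hw, hws⟩
    obtain ⟨v, hvw, hv⟩ := exists_forcer_of_mem_zfBlueAt_succ hw hws
    exact hf _ _ hvw ▸ ⟨hvw, hv⟩
  have hnew : (blue (s + 1) \ blue s).ncard ≤ (blue s \ f '' (blue s \ B)).ncard := by
    refine Set.ncard_le_ncard_of_injOn f ?_ ?_ (Set.toFinite _)
    · intro w hw
      obtain ⟨-, hv, hfresh⟩ := hforcer w hw
      refine ⟨hv, ?_⟩
      rintro ⟨w', ⟨hw', hw'B⟩, hfw'⟩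
      obtain ⟨v', hv'w', -⟩ := exists_forcer_of_mem_zfBlueAt hw' hw'B
      have hw'F : (f w, w') ∈ F := by rwa [← hfw', hf _ _ hv'w']
      exact hw'B (hfresh w' hw'F hw')
    · intro w₁ hw₁ w₂ hw₂ heq
      exact hfst _ _ _ (hforcer w₁ hw₁).1 (heq ▸ (hforcer w₂ hw₂).1)
  have hactive : (blue s \ f '' (blue s \ B)).ncard ≤ B.ncard := by
    rw [Set.ncard_sdiff (image_forcer_subset_zfBlueAt hf s)]
    have := ncard_zfBlueAt_le_add_ncard_image (G := G) (B := B) hfst hf s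
    omega
  have := Set.ncard_le_ncard_sdiff_add_ncard (blue (s + 1)) (blue s)
  omega

lemma ncard_zfBlueAt_le (hfst : ∀ v w w', (v, w) ∈ F → (v, w') ∈ F → w = w')
    (hf : ∀ v w, (v, w) ∈ F → f w = v) (s : ℕ) :
    (zfBlueAt G F B s).ncard ≤ B.ncard * (s + 1) := by
  induction s with
  | zero => simp [zfBlueAt]
  | succ s ih =>
    have := ncard_zfBlueAt_succ_le (G := G) (B := B) hfst hf s
    rw [mul_add_one]
    omega

end Propagation

lemma IsZFForceSet.card_le_of_zfBlueAt_eq_univ [Fintype V] {G : SimpleGraph V} {B : Set V}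
    {F : Set (V × V)} (hF : IsZFForceSet G B F) {t : ℕ} (ht : zfBlueAt G F B t = Set.univ) :
    Fintype.card V ≤ B.ncard * (t + 1) := by
  classical
  let f : V → V := fun w => if h : ∃ v, (v, w) ∈ F then h.choose else w
  have hf : ∀ v w, (v, w) ∈ F → f w = v := fun v w hvw => by
    have h : ∃ v, (v, w) ∈ F := ⟨v, hvw⟩
    simp only [f, dif_pos h]
    exact hF.eq_of_snd_eq h.choose_spec hvw
  have := ncard_zfBlueAt_le (G := G) (B := B) (fun _ _ _ => hF.eq_of_fst_eq) hf t
  rwa [ht, Set.ncard_univ, Nat.card_eq_fintype_card] at this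

/-- for a graph of order `n`, `th_⌊Z⌋(G) ≥ ⌈2√n − 1⌉`. -/
theorem stmt5 {V : Type*} [Fintype V] (G : SimpleGraph V) :
    ((⌈2 * Real.sqrt (Fintype.card V) - 1⌉).toNat : ℕ∞) ≤ thZFgraph G := by
  refine le_sInf ?_
  rintro _ ⟨B, rfl⟩
  rw [thZF, ptZF, ENat.add_sInf]
  refine le_iInf₂ ?_
  rintro _ ⟨F, hF, rfl⟩
  rw [ptZFofF, ENat.add_sInf]
  refine le_iInf₂ ?_
  rintro _ ⟨t, rfl, ht⟩
  exact_mod_cast ceil_two_mul_sqrt_sub_one_toNat_le (hF.card_le_of_zfBlueAt_eq_univ ht)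

end ZFT
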